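/- Let G be a connected graph with n ≥ 2 vertices. Then DE(G) ≥ 4W(G)/n, where W(G) is the Wiener index of G. -/

import Mathlib

open SimpleGraph Finset

/-- The distance matrix of a graph `G`: the `(i,j)` entry is the graph distance
between `i` and `j`, as a real number. -/
noncomputable def distMatrix {V : Type*} [Fintype V] (G : SimpleGraph V) : Matrix V V ℝ :=
  fun i j => (G.dist i j : ℝ)

lemma distMatrix_isHermitian {V : Type*} [Fintype V] (G : SimpleGraph V) :
    (distMatrix G).IsHermitian := by
  unfold Matrix.IsHermitian
  ext i j
  simp [distMatrix, Matrix.conjTranspose_apply, SimpleGraph.dist_comm]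

/-- The distance spectral radius of `G`: the largest eigenvalue of the distance matrix. -/
noncomputable def distSpectralRadius {V : Type*} [Fintype V] [DecidableEq V]
    (G : SimpleGraph V) : ℝ :=
  ⨆ i, (distMatrix_isHermitian G).eigenvalues i

/-- The distance energy of `G`: the sum of the absolute values of the eigenvalues of
the distance matrix. -/
noncomputable def distEnergy {V : Type*} [Fintype V] [DecidableEq V]
    (G : SimpleGraph V) : ℝ :=
  ∑ i, |(distMatrix_isHermitian G).eigenvalues i|

/-! The distance matrix has zero diagonal, so its eigenvalues sum to zero and each of them is at
most half the distance energy. Testing the matrix against the all-ones vector bounds the sum of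
all distances, `2 W(G)`, by `n` times the largest eigenvalue (Rayleigh), hence by `n DE(G) / 2`. -/

theorem two_nsmul_le_sum_abs_of_sum_eq_zero {ι α : Type*} [DecidableEq ι] [AddCommGroup α]
    [LinearOrder α] [IsOrderedAddMonoid α] {s : Finset ι} {f : ι → α} (hf : ∑ j ∈ s, f j = 0)
    {i : ι} (hi : i ∈ s) : 2 • f i ≤ ∑ j ∈ s, |f j| := by
  have hrest : ∑ j ∈ s.erase i, f j = -f i := by
    rw [eq_neg_iff_add_eq_zero, add_comm, add_sum_erase s f hi, hf]
  calc 2 • f i = f i + -(-f i) := by rw [neg_neg, two_nsmul]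
    _ ≤ |f i| + |∑ j ∈ s.erase i, f j| := by
        rw [hrest]; exact add_le_add (le_abs_self _) (neg_le_abs _)
    _ ≤ |f i| + ∑ j ∈ s.erase i, |f j| := add_le_add le_rfl (abs_sum_le_sum_abs _ _)
    _ = ∑ j ∈ s, |f j| := add_sum_erase s (fun j ↦ |f j|) hi

namespace Matrix

variable {ι : Type*} [Fintype ι] [DecidableEq ι] {A : Matrix ι ι ℝ}

theorem IsHermitian.two_mul_eigenvalues_le_sum_abs (hA : A.IsHermitian) (htr : A.trace = 0)
    (i : ι) : 2 * hA.eigenvalues i ≤ ∑ j, |hA.eigenvalues j| := by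
  have hsum : ∑ j, hA.eigenvalues j = 0 := by
    simpa [hA.trace_eq_sum_eigenvalues] using htr
  simpa using two_nsmul_le_sum_abs_of_sum_eq_zero hsum (mem_univ i)

theorem IsHermitian.dotProduct_mulVec_eq_sum_eigenvalues (hA : A.IsHermitian) (x : ι → ℝ) :
    x ⬝ᵥ A *ᵥ x =
      ∑ i, hA.eigenvalues i * (star (hA.eigenvectorUnitary : Matrix ι ι ℝ) *ᵥ x) i ^ 2 := by
  set U : Matrix ι ι ℝ := ↑hA.eigenvectorUnitary
  have hA' : A = U * diagonal hA.eigenvalues * star U := by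
    simpa using hA.spectral_theorem
  have hxU : x ᵥ* U = star U *ᵥ x := by
    rw [star_eq_conjTranspose, conjTranspose_eq_transpose_of_trivial, mulVec_transpose]
  conv_lhs => rw [hA', ← mulVec_mulVec, ← mulVec_mulVec, dotProduct_mulVec, hxU]
  simp only [dotProduct, mulVec_diagonal, sq]
  exact sum_congr rfl fun i _ ↦ by ring

theorem dotProduct_self_star_unitary_mulVec (U : unitaryGroup ι ℝ) (x : ι → ℝ) :
    (star (U : Matrix ι ι ℝ) *ᵥ x) ⬝ᵥ (star (U : Matrix ι ι ℝ) *ᵥ x) = x ⬝ᵥ x := by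
  rw [dotProduct_comm, dotProduct_mulVec, star_eq_conjTranspose,
    conjTranspose_eq_transpose_of_trivial, vecMul_transpose, mulVec_mulVec,
    ← conjTranspose_eq_transpose_of_trivial, ← star_eq_conjTranspose, mem_unitaryGroup_iff.mp U.2,
    one_mulVec]

theorem IsHermitian.dotProduct_mulVec_le (hA : A.IsHermitian) {c : ℝ}
    (hc : ∀ i, hA.eigenvalues i ≤ c) (x : ι → ℝ) : x ⬝ᵥ A *ᵥ x ≤ c * (x ⬝ᵥ x) := by
  set y := star (hA.eigenvectorUnitary : Matrix ι ι ℝ) *ᵥ x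
  calc x ⬝ᵥ A *ᵥ x = ∑ i, hA.eigenvalues i * y i ^ 2 := hA.dotProduct_mulVec_eq_sum_eigenvalues x
    _ ≤ ∑ i, c * y i ^ 2 := by gcongr with i; exact hc i
    _ = c * (y ⬝ᵥ y) := by simp only [dotProduct, mul_sum, sq]
    _ = c * (x ⬝ᵥ x) := by rw [dotProduct_self_star_unitary_mulVec]

theorem IsHermitian.two_mul_sum_le_card_mul_sum_abs_eigenvalues (hA : A.IsHermitian)
    (htr : A.trace = 0) :
    2 * ∑ i, ∑ j, A i j ≤ Fintype.card ι * ∑ j, |hA.eigenvalues j| := by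
  have h := hA.dotProduct_mulVec_le
    (fun i ↦ (le_div_iff₀' two_pos).mpr (hA.two_mul_eigenvalues_le_sum_abs htr i)) 1
  have hsum : 1 ⬝ᵥ A *ᵥ 1 = ∑ i, ∑ j, A i j := by simp [dotProduct, mulVec]
  have hcard : (1 : ι → ℝ) ⬝ᵥ 1 = Fintype.card ι := by simp [dotProduct]
  rw [hsum, hcard] at h
  linarith

end Matrix

theorem trace_distMatrix {V : Type*} [Fintype V] (G : SimpleGraph V) :
    (distMatrix G).trace = 0 := by
  simp [Matrix.trace, distMatrix]

theorem distEnergy_nonneg {V : Type*} [Fintype V] [DecidableEq V] (G : SimpleGraph V) :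
    0 ≤ distEnergy G :=
  sum_nonneg fun _ _ ↦ abs_nonneg _

theorem distEnergy_ge_wiener_general {n : ℕ} (G : SimpleGraph (Fin n)) :
    4 * ((∑ i : Fin n, ∑ j : Fin n, (G.dist i j : ℝ)) / 2) / (n : ℝ) ≤ distEnergy G := by
  have h : 2 * ∑ i : Fin n, ∑ j : Fin n, (G.dist i j : ℝ) ≤ n * distEnergy G := by
    have := (distMatrix_isHermitian G).two_mul_sum_le_card_mul_sum_abs_eigenvalues
      (trace_distMatrix G)
    rwa [Fintype.card_fin] at this
  calc 4 * ((∑ i : Fin n, ∑ j : Fin n, (G.dist i j : ℝ)) / 2) / n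
      = 2 * (∑ i : Fin n, ∑ j : Fin n, (G.dist i j : ℝ)) / n := by ring
    _ ≤ distEnergy G := div_le_of_le_mul₀ n.cast_nonneg (distEnergy_nonneg G) (by linarith)

/-- For a connected graph `G` with `n ≥ 2` vertices, `DE(G) ≥ 4W(G)/n`, where
`W(G) = (1/2)·Σᵢ Σⱼ d(i,j)` is the Wiener index. -/
theorem distEnergy_ge_wiener {n : ℕ} (hn : 2 ≤ n) (G : SimpleGraph (Fin n))
    (hconn : G.Connected) :
    4 * ((∑ i : Fin n, ∑ j : Fin n, (G.dist i j : ℝ)) / 2) / (n : ℝ) ≤ distEnergy G :=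
  distEnergy_ge_wiener_general G
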